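/- (1) For every polynomial f ∈ ℂ[z] and every w ∈ ℂ, setting P(z) = Σ_{k≥0} f^{(k)}(z) (a finite sum, over all derivatives of f), one has P(w) = ∫₀^∞ f(w + t)·e^{−t} dt, where the integral is over the real half-line [0, ∞). (2) Consequently, if α₁, …, α_s ∈ ℂ are distinct, n = (n₁, …, n_s) ∈ ℕ^s, N = n₁+⋯+n_s, f_n(z) = ∏_{k=1}^s (z − α_k)^{n_k}, P_n(z) = Σ_{k=0}^{N} f_n^{(k)}(z), and R = max_{1≤k,ℓ≤s} |α_k − α_ℓ|, then |P_n(α_i)| ≤ e^R · N! for every i ∈ {1, …, s}. -/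

import Mathlib

open Polynomial MeasureTheory Set Filter Topology

/-!
With `P = ∑ₖ f⁽ᵏ⁾` one has `P - P' = f`, so `t ↦ -P(w + t) e^{-t}` is an antiderivative of
`f(w + t) e^{-t}` that vanishes at `+∞`; this is (1). For (2), each factor of `f_n(αᵢ + t)` has
modulus at most `t + R` when `t ≥ 0`, hence
`|P_n(αᵢ)| ≤ ∫₀^∞ (t + R)^N e^{-t} dt = e^R ∫_R^∞ u^N e^{-u} du ≤ e^R Γ(N + 1) = e^R N!`.
-/

/-- `f_m(z) = ∏ₖ (z − αₖ)^{mₖ}`. -/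
noncomputable def fpoly {s : ℕ} (α : Fin s → ℂ) (m : Fin s → ℕ) : ℂ[X] :=
  ∏ k, (X - C (α k)) ^ m k

/-- `P_m(z) = Σ_{k=0}^{M} f_m^{(k)}(z)`, the sum of `f_m` and all its derivatives. -/
noncomputable def Ppoly {s : ℕ} (α : Fin s → ℂ) (m : Fin s → ℕ) : ℂ[X] :=
  ∑ k ∈ Finset.range (∑ i, m i + 1), derivative^[k] (fpoly α m)

theorem Real.integrableOn_pow_mul_exp_neg (j : ℕ) :
    IntegrableOn (fun t : ℝ => t ^ j * Real.exp (-t)) (Ioi 0) := by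
  refine (Real.GammaIntegral_convergent (s := j + 1) (by positivity)).congr_fun
    (fun t _ => ?_) measurableSet_Ioi
  simp only [add_sub_cancel_right, Real.rpow_natCast]
  ring

theorem Real.integral_pow_mul_exp_neg (j : ℕ) :
    ∫ t in Ioi (0 : ℝ), t ^ j * Real.exp (-t) = j.factorial := by
  rw [← Real.Gamma_nat_eq_factorial, Real.Gamma_eq_integral (by positivity)]
  refine setIntegral_congr_fun measurableSet_Ioi fun t _ => ?_
  simp only [add_sub_cancel_right, Real.rpow_natCast]
  ring

namespace Polynomial

theorem sum_iterate_derivative_sub_derivative {R : Type*} [Ring R] (f : R[X]) {n : ℕ}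
    (hn : f.natDegree < n) :
    (∑ k ∈ Finset.range n, derivative^[k] f) -
      derivative (∑ k ∈ Finset.range n, derivative^[k] f) = f := by
  have telescope := Finset.sum_range_sub (fun k => derivative^[k] f) n
  simp only [Function.iterate_succ_apply', Finset.sum_sub_distrib, iterate_derivative_eq_zero hn,
    Function.iterate_zero_apply, zero_sub] at telescope
  rw [derivative_sum, ← neg_sub, telescope, neg_neg]

-- Reduces integrability and decay at `+∞` to those of the Gamma integrands `t ^ j * e^{-t}`.
theorem eval_ofReal_mul_cexp_neg (g : ℂ[X]) (t : ℝ) :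
    g.eval (t : ℂ) * Complex.exp (-t) =
      ∑ j ∈ Finset.range (g.natDegree + 1), g.coeff j * ((t ^ j * Real.exp (-t) : ℝ) : ℂ) := by
  rw [eval_eq_sum_range, Finset.sum_mul]
  push_cast
  exact Finset.sum_congr rfl fun j _ => by ring

theorem integrableOn_eval_ofReal_mul_cexp_neg (g : ℂ[X]) :
    IntegrableOn (fun t : ℝ => g.eval (t : ℂ) * Complex.exp (-t)) (Ioi 0) := by
  simp_rw [eval_ofReal_mul_cexp_neg]
  exact integrable_finsetSum _ fun j _ =>
    ((Real.integrableOn_pow_mul_exp_neg j).ofReal).const_mul _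

theorem tendsto_eval_ofReal_mul_cexp_neg_atTop (g : ℂ[X]) :
    Tendsto (fun t : ℝ => g.eval (t : ℂ) * Complex.exp (-t)) atTop (𝓝 0) := by
  simp_rw [eval_ofReal_mul_cexp_neg]
  simpa using tendsto_finsetSum (Finset.range (g.natDegree + 1)) fun j _ =>
    ((Real.tendsto_pow_mul_exp_neg_atTop_nhds_zero j).ofReal).const_mul (g.coeff j)

theorem eval_add_mul_cexp_neg_eq_comp (f : ℂ[X]) (w : ℂ) :
    (fun t : ℝ => f.eval (w + t) * Complex.exp (-t)) =
      fun t : ℝ => (f.comp (C w + X)).eval (t : ℂ) * Complex.exp (-t) := by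
  ext t
  rw [eval_comp, eval_add, eval_C, eval_X]

theorem integrableOn_eval_add_mul_cexp_neg (f : ℂ[X]) (w : ℂ) :
    IntegrableOn (fun t : ℝ => f.eval (w + t) * Complex.exp (-t)) (Ioi 0) := by
  rw [eval_add_mul_cexp_neg_eq_comp]
  exact integrableOn_eval_ofReal_mul_cexp_neg (f.comp (C w + X))

theorem tendsto_eval_add_mul_cexp_neg_atTop (f : ℂ[X]) (w : ℂ) :
    Tendsto (fun t : ℝ => f.eval (w + t) * Complex.exp (-t)) atTop (𝓝 0) := by
  rw [eval_add_mul_cexp_neg_eq_comp]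
  exact tendsto_eval_ofReal_mul_cexp_neg_atTop (f.comp (C w + X))

theorem hasDerivAt_neg_eval_add_mul_cexp_neg (P : ℂ[X]) (w : ℂ) (t : ℝ) :
    HasDerivAt (fun t : ℝ => -(P.eval (w + t) * Complex.exp (-t)))
      ((P - derivative P).eval (w + t) * Complex.exp (-t)) t := by
  have hP : HasDerivAt (fun z : ℂ => P.eval (w + z)) ((derivative P).eval (w + t)) t := by
    simpa using (P.hasDerivAt (w + t)).comp_const_add w t
  have hexp : HasDerivAt (fun z : ℂ => Complex.exp (-z)) (-Complex.exp (-t)) t := by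
    simpa using (hasDerivAt_neg (t : ℂ)).cexp
  refine (hP.comp_ofReal.mul hexp.comp_ofReal).neg.congr_deriv ?_
  rw [eval_sub]
  ring

theorem sum_iterate_derivative_eval_eq_integral (f : ℂ[X]) (w : ℂ) :
    ∑ k ∈ Finset.range (f.natDegree + 1), (derivative^[k] f).eval w =
      ∫ t : ℝ in Ioi 0, f.eval (w + t) * Complex.exp (-t) := by
  set P := ∑ k ∈ Finset.range (f.natDegree + 1), derivative^[k] f
  have hP : P - derivative P = f := sum_iterate_derivative_sub_derivative f (Nat.lt_succ_self _)
  have := integral_Ioi_of_hasDerivAt_of_tendsto'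
    (fun t _ => hasDerivAt_neg_eval_add_mul_cexp_neg P w t)
    (hP ▸ integrableOn_eval_add_mul_cexp_neg f w) (tendsto_eval_add_mul_cexp_neg_atTop P w).neg
  rw [hP] at this
  simp [this, P, eval_finsetSum]

end Polynomial

theorem setIntegral_Ioi_comp_add_right {E : Type*} [NormedAddCommGroup E] [NormedSpace ℝ E]
    (g : ℝ → E) (a d : ℝ) : ∫ t in Ioi a, g (t + d) = ∫ u in Ioi (a + d), g u := by
  have := (measurePreserving_add_right volume d).setIntegral_preimage_emb
    (measurableEmbedding_addRight d) g (Ioi (a + d))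
  rwa [preimage_add_const_Ioi, add_sub_cancel_right] at this

theorem integrableOn_Ioi_comp_add_right_iff {E : Type*} [NormedAddCommGroup E] {g : ℝ → E}
    (a d : ℝ) : IntegrableOn (fun t => g (t + d)) (Ioi a) ↔ IntegrableOn g (Ioi (a + d)) := by
  have := (measurePreserving_add_right volume d).integrableOn_comp_preimage
    (measurableEmbedding_addRight d) (f := g) (s := Ioi (a + d))
  rwa [preimage_add_const_Ioi, add_sub_cancel_right] at this

theorem add_pow_mul_exp_neg_eq (N : ℕ) (R t : ℝ) :
    (t + R) ^ N * Real.exp (-t) = Real.exp R * ((t + R) ^ N * Real.exp (-(t + R))) := by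
  rw [neg_add, Real.exp_add, Real.exp_neg R]
  field_simp

theorem integrableOn_add_pow_mul_exp_neg (N : ℕ) {R : ℝ} (hR : 0 ≤ R) :
    IntegrableOn (fun t : ℝ => (t + R) ^ N * Real.exp (-t)) (Ioi 0) := by
  simp_rw [add_pow_mul_exp_neg_eq N R]
  refine Integrable.const_mul ?_ _
  refine (integrableOn_Ioi_comp_add_right_iff (g := fun u : ℝ => u ^ N * Real.exp (-u)) 0 R).2 ?_
  exact (Real.integrableOn_pow_mul_exp_neg N).mono_set (Ioi_subset_Ioi (by linarith))

theorem integral_add_pow_mul_exp_neg_le (N : ℕ) {R : ℝ} (hR : 0 ≤ R) :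
    ∫ t in Ioi (0 : ℝ), (t + R) ^ N * Real.exp (-t) ≤ Real.exp R * N.factorial := by
  simp_rw [add_pow_mul_exp_neg_eq N R]
  rw [integral_const_mul, setIntegral_Ioi_comp_add_right (fun u : ℝ => u ^ N * Real.exp (-u)),
    zero_add, ← Real.integral_pow_mul_exp_neg N]
  gcongr
  · filter_upwards [ae_restrict_mem measurableSet_Ioi] with u (hu : 0 < u)
    positivity
  · exact Real.integrableOn_pow_mul_exp_neg N

section RootProduct

variable {s : ℕ} (α : Fin s → ℂ) (m : Fin s → ℕ)

theorem natDegree_fpoly : (fpoly α m).natDegree = ∑ k, m k := by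
  rw [fpoly, natDegree_prod _ _ fun k _ => pow_ne_zero _ (X_sub_C_ne_zero (α k))]
  simp [natDegree_pow]

theorem norm_eval_fpoly_le {z : ℂ} {r : ℝ} (h : ∀ k, ‖z - α k‖ ≤ r) :
    ‖(fpoly α m).eval z‖ ≤ r ^ ∑ k, m k := by
  rw [fpoly, eval_prod, norm_prod, ← Finset.prod_pow_eq_pow_sum]
  gcongr with k
  rw [eval_pow, norm_pow, eval_sub, eval_X, eval_C]
  exact pow_le_pow_left₀ (norm_nonneg _) (h k) _

theorem eval_Ppoly_eq_integral (w : ℂ) :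
    (Ppoly α m).eval w = ∫ t : ℝ in Ioi 0, (fpoly α m).eval (w + t) * Complex.exp (-t) := by
  rw [← sum_iterate_derivative_eval_eq_integral, Ppoly, eval_finsetSum, natDegree_fpoly]

theorem norm_eval_Ppoly_le {w : ℂ} {R : ℝ} (hR : 0 ≤ R) (hw : ∀ k, ‖w - α k‖ ≤ R) :
    ‖(Ppoly α m).eval w‖ ≤ Real.exp R * (∑ k, m k).factorial := by
  rw [eval_Ppoly_eq_integral]
  refine (norm_integral_le_of_norm_le (integrableOn_add_pow_mul_exp_neg _ hR) ?_).trans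
    (integral_add_pow_mul_exp_neg_le _ hR)
  filter_upwards [ae_restrict_mem measurableSet_Ioi] with t (ht : 0 < t)
  rw [norm_mul, Complex.norm_exp, Complex.neg_re, Complex.ofReal_re]
  gcongr
  refine norm_eval_fpoly_le α m fun k => ?_
  calc ‖w + t - α k‖ = ‖(t : ℂ) + (w - α k)‖ := by ring_nf
    _ ≤ t + R := by
      grw [norm_add_le, Complex.norm_real, Real.norm_of_nonneg ht.le, hw k]

end RootProduct

/-- (1) For every `f ∈ ℂ[z]` and `w ∈ ℂ`, with `P` the sum of `f` and all its derivatives,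
`P(w) = ∫₀^∞ f(w+t) e^{−t} dt`.
(2) Consequently, for distinct `α₁,…,α_s`, `n ∈ ℕ^s` with sum `N`, and
`R = max_{k,ℓ} |αₖ−α_ℓ|`, one has `|P_n(αᵢ)| ≤ e^R N!` for every `i`. -/
theorem stmt19 :
    (∀ (f : ℂ[X]) (w : ℂ),
      ∑ k ∈ Finset.range (f.natDegree + 1), (derivative^[k] f).eval w =
        ∫ t : ℝ in Set.Ioi (0 : ℝ), f.eval (w + (t : ℂ)) * Complex.exp (-(t : ℂ))) ∧
    (∀ (s : ℕ) (α : Fin s → ℂ), Function.Injective α →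
      ∀ (n : Fin s → ℕ) (N : ℕ), N = ∑ i, n i →
      ∀ R : ℝ, R = sSup {r : ℝ | ∃ k ℓ : Fin s, r = ‖α k - α ℓ‖} →
      ∀ i : Fin s,
        ‖(Ppoly α n).eval (α i)‖ ≤ Real.exp R * N.factorial) := by
  refine ⟨sum_iterate_derivative_eval_eq_integral, ?_⟩
  rintro s α - n N rfl R rfl i
  have hbdd : BddAbove {r : ℝ | ∃ k ℓ : Fin s, r = ‖α k - α ℓ‖} :=
    (finite_range fun p : Fin s × Fin s => ‖α p.1 - α p.2‖).bddAbove.mono <| by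
      rintro _ ⟨k, ℓ, rfl⟩
      exact ⟨(k, ℓ), rfl⟩
  have hdist : ∀ k, ‖α i - α k‖ ≤ sSup {r : ℝ | ∃ k ℓ : Fin s, r = ‖α k - α ℓ‖} :=
    fun k => le_csSup hbdd ⟨i, k, rfl⟩
  exact norm_eval_Ppoly_le α n ((norm_nonneg _).trans (hdist i)) hdist
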